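/- If τ lies in the Siegel upper half space ℍ₂ = {τ ∈ M₂(ℂ) : τ = ᵗτ, Im τ positive definite}, then Θ_{ab}(τ) = ϑ_{Re(a),Re(b)}(τ) · ϑ_{Im(a),Im(b)}(τ), where ϑ_{a'b'}(τ) = Σ_{n∈ℤ²} e[½(n+a')τᵗ(n+a') + (n+a')ᵗb'] is Riemann's theta constant with characteristics a',b' ∈ ℚ². -/

import Mathlib

open Complex
open scoped ComplexOrder

/-- `e[x] = exp(2πi x)`. -/
noncomputable def e (x : ℂ) : ℂ := Complex.exp (2 * Real.pi * I * x)

/-- The theta function `Θ_{ab}(τ) = Σ_{n ∈ ℤ[i]²} e[½(n+a)τ(n+a)* + Re((n+a)b*)]`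
on 2×2 complex matrices `τ`, where `ℤ[i]²` is parametrized by quadruples of
integers via `n = (n₁ + n₂ i, n₃ + n₄ i)`, and `v* = ᵗv̄` for row vectors `v`. -/
noncomputable def Theta (a b : ℂ × ℂ) (τ : Matrix (Fin 2) (Fin 2) ℂ) : ℂ :=
  ∑' n : (ℤ × ℤ) × (ℤ × ℤ),
    let v₁ : ℂ := a.1 + n.1.1 + n.1.2 * I
    let v₂ : ℂ := a.2 + n.2.1 + n.2.2 * I
    e ((1 / 2) * (v₁ * (τ 0 0 * (starRingEnd ℂ) v₁ + τ 0 1 * (starRingEnd ℂ) v₂) +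
        v₂ * (τ 1 0 * (starRingEnd ℂ) v₁ + τ 1 1 * (starRingEnd ℂ) v₂)) +
      ((v₁ * (starRingEnd ℂ) b.1 + v₂ * (starRingEnd ℂ) b.2).re : ℂ))

/-- Riemann theta constant with characteristics `a', b' ∈ ℝ²`:
`ϑ_{a'b'}(τ) = Σ_{n∈ℤ²} e[½(n+a')τᵗ(n+a') + (n+a')ᵗb']`. -/
noncomputable def rtheta (a' b' : ℝ × ℝ) (τ : Matrix (Fin 2) (Fin 2) ℂ) : ℂ :=
  ∑' n : ℤ × ℤ,
    let v₁ : ℂ := (n.1 : ℂ) + (a'.1 : ℂ)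
    let v₂ : ℂ := (n.2 : ℂ) + (a'.2 : ℂ)
    e ((1 / 2) * (v₁ * (τ 0 0 * v₁ + τ 0 1 * v₂) + v₂ * (τ 1 0 * v₁ + τ 1 1 * v₂)) +
      (v₁ * (b'.1 : ℂ) + v₂ * (b'.2 : ℂ)))

/- ### Auxiliary lemmas -/

lemma e_add (x y : ℂ) : e (x + y) = e x * e y := by
  rw [e, e, e, ← Complex.exp_add]; ring_nf

lemma norm_e (x : ℂ) : ‖e x‖ = Real.exp (-(2 * Real.pi * x.im)) := by
  rw [e, Complex.norm_exp]
  congr 1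
  simp [Complex.mul_re, Complex.mul_im]

/-- The general term of `rtheta`, as a standalone function. -/
noncomputable def rterm (a' b' : ℝ × ℝ) (τ : Matrix (Fin 2) (Fin 2) ℂ) (n : ℤ × ℤ) : ℂ :=
  e ((1 / 2) * (((n.1 : ℂ) + (a'.1 : ℂ)) * (τ 0 0 * ((n.1 : ℂ) + (a'.1 : ℂ)) + τ 0 1 * ((n.2 : ℂ) + (a'.2 : ℂ))) +
      ((n.2 : ℂ) + (a'.2 : ℂ)) * (τ 1 0 * ((n.1 : ℂ) + (a'.1 : ℂ)) + τ 1 1 * ((n.2 : ℂ) + (a'.2 : ℂ)))) +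
    (((n.1 : ℂ) + (a'.1 : ℂ)) * (b'.1 : ℂ) + ((n.2 : ℂ) + (a'.2 : ℂ)) * (b'.2 : ℂ)))

lemma norm_rterm (a' b' : ℝ × ℝ) (τ : Matrix (Fin 2) (Fin 2) ℂ) (h10 : τ 1 0 = τ 0 1) (n : ℤ × ℤ) :
    ‖rterm a' b' τ n‖ = Real.exp (-Real.pi *
      (((n.1 : ℝ) + a'.1) ^ 2 * (τ 0 0).im + 2 * ((n.1 : ℝ) + a'.1) * ((n.2 : ℝ) + a'.2) * (τ 0 1).im
        + ((n.2 : ℝ) + a'.2) ^ 2 * (τ 1 1).im)) := by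
  rw [rterm, h10, norm_e]
  congr 1
  simp [Complex.add_im, Complex.add_re, Complex.mul_im, Complex.mul_re, Complex.div_re,
    Complex.div_im, Complex.normSq_ofNat, Complex.one_re, Complex.one_im]
  ring

lemma gauss1d {c : ℝ} (hc : 0 < c) : Summable fun n : ℤ => Real.exp (-(c * (n : ℝ) ^ 2)) := by
  have h := summable_pow_mul_jacobiTheta₂_term_bound 0 (div_pos hc Real.pi_pos) 0
  refine h.congr fun n => ?_
  simp only [pow_zero, one_mul]
  congr 1
  have hπ : Real.pi ≠ 0 := Real.pi_ne_zero
  field_simp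
  ring

lemma quadb {α β γ : ℝ} (hα : 0 < α) (hγ : 0 < γ) (hD : 0 < α * γ - β ^ 2) (x y : ℝ) :
    (α * γ - β ^ 2) / (α + γ) * (x ^ 2 + y ^ 2) ≤
      x ^ 2 * α + 2 * x * y * β + y ^ 2 * γ := by
  set c := (α * γ - β ^ 2) / (α + γ) with hc
  have hs : 0 < α + γ := by linarith
  have hmul : c * (α + γ) = α * γ - β ^ 2 := div_mul_cancel₀ _ hs.ne'
  have hαc : 0 < α - c := by
    have h1 : (α - c) * (α + γ) = α ^ 2 + β ^ 2 := by rw [sub_mul, hmul]; ring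
    nlinarith [sq_nonneg β, sq_nonneg α, hα]
  have hkey : (α - c) * (γ - c) - β ^ 2 = c ^ 2 := by nlinarith [hmul]
  nlinarith [sq_nonneg ((α - c) * x + β * y), sq_nonneg y, sq_nonneg c,
    mul_nonneg (mul_nonneg (sq_nonneg c) (sq_nonneg y)) hαc.le, hαc,
    mul_pos hαc hαc]

lemma summable_norm_rterm (a' b' : ℝ × ℝ) (τ : Matrix (Fin 2) (Fin 2) ℂ)
    (hsym : τ = τ.transpose) (hpos : (τ.map Complex.im).PosDef) :
    Summable fun n : ℤ × ℤ => ‖rterm a' b' τ n‖ := by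
  have h10 : τ 1 0 = τ 0 1 := congrFun (congrFun hsym 1) 0
  set α := (τ 0 0).im with hα'
  set β := (τ 0 1).im with hβ'
  set γ := (τ 1 1).im with hγ'
  have h1 := hpos.dotProduct_mulVec_pos (x := ![1, 0]) (by intro h; simpa using congrFun h 0)
  have h2 := hpos.dotProduct_mulVec_pos (x := ![0, 1]) (by intro h; simpa using congrFun h 1)
  have hdet := hpos.det_pos
  rw [Matrix.det_fin_two] at hdet
  simp [dotProduct, Matrix.mulVec, Fin.sum_univ_two, Matrix.map_apply, h10] at h1 h2 hdet
  have hα : 0 < α := h1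
  have hγ : 0 < γ := h2
  have hD : 0 < α * γ - β ^ 2 := by nlinarith [hdet]
  set c := (α * γ - β ^ 2) / (α + γ) with hc'
  have hc : 0 < c := div_pos hD (by linarith)
  have hd : 0 < Real.pi * c / 2 := by positivity
  set d := Real.pi * c / 2 with hd'
  set K := Real.exp (Real.pi * c * (a'.1 ^ 2 + a'.2 ^ 2)) with hK'
  have hbound : ∀ n : ℤ × ℤ, ‖rterm a' b' τ n‖ ≤
      K * (Real.exp (-(d * (n.1 : ℝ) ^ 2)) * Real.exp (-(d * (n.2 : ℝ) ^ 2))) := by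
    intro n
    rw [norm_rterm a' b' τ h10 n, hK', ← Real.exp_add, ← Real.exp_add]
    apply Real.exp_le_exp.mpr
    have hQ := quadb hα hγ hD ((n.1 : ℝ) + a'.1) ((n.2 : ℝ) + a'.2)
    have hx1 : (n.1 : ℝ) ^ 2 / 2 - a'.1 ^ 2 ≤ ((n.1 : ℝ) + a'.1) ^ 2 := by
      nlinarith [sq_nonneg ((n.1 : ℝ) + 2 * a'.1)]
    have hx2 : (n.2 : ℝ) ^ 2 / 2 - a'.2 ^ 2 ≤ ((n.2 : ℝ) + a'.2) ^ 2 := by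
      nlinarith [sq_nonneg ((n.2 : ℝ) + 2 * a'.2)]
    have h5 : c * ((n.1 : ℝ) ^ 2 / 2 - a'.1 ^ 2 + ((n.2 : ℝ) ^ 2 / 2 - a'.2 ^ 2)) ≤
        ((n.1 : ℝ) + a'.1) ^ 2 * α + 2 * ((n.1 : ℝ) + a'.1) * ((n.2 : ℝ) + a'.2) * β +
          ((n.2 : ℝ) + a'.2) ^ 2 * γ := by
      refine le_trans ?_ hQ
      have := mul_le_mul_of_nonneg_left (add_le_add hx1 hx2) hc.le
      linarith
    have h6 := mul_le_mul_of_nonneg_left h5 Real.pi_pos.le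
    rw [hd']
    nlinarith [h6]
  refine Summable.of_nonneg_of_le (fun n => norm_nonneg _) hbound ?_
  exact ((gauss1d hd).mul_of_nonneg (gauss1d hd)
    (fun _ => (Real.exp_pos _).le) (fun _ => (Real.exp_pos _).le)).mul_left K

theorem stmt18 (a b : ℂ × ℂ) (τ : Matrix (Fin 2) (Fin 2) ℂ)
    (hsym : τ = τ.transpose) (hpos : (τ.map Complex.im).PosDef) :
    Theta a b τ =
      rtheta (a.1.re, a.2.re) (b.1.re, b.2.re) τ *
        rtheta (a.1.im, a.2.im) (b.1.im, b.2.im) τ := by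
  have h10 : τ 1 0 = τ 0 1 := congrFun (congrFun hsym 1) 0
  have hF : Summable fun n : ℤ × ℤ => ‖rterm (a.1.re, a.2.re) (b.1.re, b.2.re) τ n‖ :=
    summable_norm_rterm _ _ τ hsym hpos
  have hG : Summable fun n : ℤ × ℤ => ‖rterm (a.1.im, a.2.im) (b.1.im, b.2.im) τ n‖ :=
    summable_norm_rterm _ _ τ hsym hpos
  have hsplit : ∀ n : (ℤ × ℤ) × (ℤ × ℤ),
      e ((1 / 2) * ((a.1 + n.1.1 + n.1.2 * I) * (τ 0 0 * (starRingEnd ℂ) (a.1 + n.1.1 + n.1.2 * I) + τ 0 1 * (starRingEnd ℂ) (a.2 + n.2.1 + n.2.2 * I)) +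
          (a.2 + n.2.1 + n.2.2 * I) * (τ 1 0 * (starRingEnd ℂ) (a.1 + n.1.1 + n.1.2 * I) + τ 1 1 * (starRingEnd ℂ) (a.2 + n.2.1 + n.2.2 * I))) +
        (((a.1 + n.1.1 + n.1.2 * I) * (starRingEnd ℂ) b.1 + (a.2 + n.2.1 + n.2.2 * I) * (starRingEnd ℂ) b.2).re : ℂ)) =
      rterm (a.1.re, a.2.re) (b.1.re, b.2.re) τ (n.1.1, n.2.1) *
        rterm (a.1.im, a.2.im) (b.1.im, b.2.im) τ (n.1.2, n.2.2) := by
    intro n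
    rw [rterm, rterm, ← e_add]
    congr 1
    rw [h10]
    simp only [Complex.ext_iff, map_add, map_mul, Complex.conj_ofReal, Complex.conj_I,
      Complex.add_re, Complex.add_im, Complex.mul_re, Complex.mul_im, Complex.ofReal_re,
      Complex.ofReal_im, Complex.I_re, Complex.I_im, Complex.conj_re, Complex.conj_im,
      Complex.neg_re, Complex.neg_im, Complex.re_ofNat, Complex.im_ofNat,
      Complex.intCast_re, Complex.intCast_im, Complex.div_re, Complex.div_im,
      Complex.one_re, Complex.one_im, Complex.normSq_ofNat]
    constructor <;> ring
  calc Theta a b τ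
      = ∑' n : (ℤ × ℤ) × (ℤ × ℤ),
          rterm (a.1.re, a.2.re) (b.1.re, b.2.re) τ (n.1.1, n.2.1) *
            rterm (a.1.im, a.2.im) (b.1.im, b.2.im) τ (n.1.2, n.2.2) := tsum_congr hsplit
    _ = ∑' z : (ℤ × ℤ) × (ℤ × ℤ),
          rterm (a.1.re, a.2.re) (b.1.re, b.2.re) τ z.1 *
            rterm (a.1.im, a.2.im) (b.1.im, b.2.im) τ z.2 :=
        by exact (Equiv.prodProdProdComm ℤ ℤ ℤ ℤ).tsum_eq fun z =>
          rterm (a.1.re, a.2.re) (b.1.re, b.2.re) τ z.1 *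
            rterm (a.1.im, a.2.im) (b.1.im, b.2.im) τ z.2
    _ = (∑' m, rterm (a.1.re, a.2.re) (b.1.re, b.2.re) τ m) *
          (∑' m, rterm (a.1.im, a.2.im) (b.1.im, b.2.im) τ m) :=
        (tsum_mul_tsum_of_summable_norm hF hG).symm
    _ = rtheta (a.1.re, a.2.re) (b.1.re, b.2.re) τ *
          rtheta (a.1.im, a.2.im) (b.1.im, b.2.im) τ := rfl
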